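/- Let X be an a-space with denominator function ζ, let α ≤ β be real numbers, and let (D,(r◁,r▷)_{r ∈ D}) be an [α,β]-draft on X with D dense in [α,β]. Then the draft has a unique realisation, namely the function f : X → [α,β] given by f(x) = inf{r ∈ D : x ∈ r◁} = sup{r ∈ D : x ∈ r▷}. Moreover, f is continuous and decreases denominators, i.e., den(f(x)) divides ζ(x) for every x ∈ X. -/
import Mathlib


open Classical in
/-- The denominator of a real number: the reduced denominator if rational, `0` if irrational. -/
noncomputable def den (r : ℝ) : ℕ :=
  if h : ∃ q : ℚ, (q : ℝ) = r then h.choose.den else 0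

lemma den_ratCast (q : ℚ) : den (q : ℝ) = q.den := by
  unfold den
  rw [dif_pos ⟨q, rfl⟩]
  congr 1
  have := (⟨q, rfl⟩ : ∃ p : ℚ, (p : ℝ) = (q : ℝ)).choose_spec
  exact_mod_cast this

lemma den_irrational {r : ℝ} (hr : ¬ ∃ q : ℚ, (q : ℝ) = r) : den r = 0 := by
  unfold den; rw [dif_neg hr]

lemma den_dvd_iff {n : ℕ} (hn : n ≠ 0) (r : ℝ) :
    den r ∣ n ↔ ∃ m : ℤ, (m : ℝ) = n * r := by
  by_cases h : ∃ q : ℚ, (q : ℝ) = r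
  · obtain ⟨q, rfl⟩ := h
    rw [den_ratCast]
    constructor
    · rintro ⟨k, hk⟩
      refine ⟨q.num * k, ?_⟩
      push_cast
      rw [show ((n:ℝ)) = (q.den : ℝ) * k by exact_mod_cast hk]
      have hd : (q.den : ℝ) ≠ 0 := by exact_mod_cast q.den_nz
      rw [show ((q:ℝ)) = (q.num : ℝ) / (q.den : ℝ) by exact_mod_cast (Rat.num_div_den q).symm]
      field_simp
    · rintro ⟨m, hm⟩
      have hm' : (m : ℚ) = n * q := by exact_mod_cast hm
      have hn' : (n : ℚ) ≠ 0 := by exact_mod_cast hn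
      have hq : q = (m : ℚ) / (n : ℚ) := by
        field_simp
        linarith [hm']
      have hdd := Rat.den_dvd m (n : ℤ)
      rw [Rat.divInt_eq_div, show ((((n:ℤ)):ℚ)) = (n:ℚ) by push_cast; ring, ← hq] at hdd
      exact_mod_cast hdd
  · rw [den_irrational h]
    simp only [zero_dvd_iff, hn, false_iff]
    rintro ⟨m, hm⟩
    exact h ⟨m / n, by push_cast; field_simp; linarith [hm]⟩

lemma isClosed_den_dvd {n : ℕ} (hn : n ≠ 0) : IsClosed {r : ℝ | den r ∣ n} := by
  have : {r : ℝ | den r ∣ n} = (fun r : ℝ => (n : ℝ) * r) ⁻¹' (Set.range ((↑) : ℤ → ℝ)) := by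
    ext r
    simp only [Set.mem_setOf_eq, Set.mem_preimage, Set.mem_range, den_dvd_iff hn]
  rw [this]
  exact Int.isClosedEmbedding_coe_real.isClosed_range.preimage (continuous_const.mul continuous_id)

/-- `AC ζ Λ`: the points of the a-space `(X, ζ)` that may be sent into `Λ ⊆ ℝ` by a
denominator-decreasing map. -/
def AC {X : Type*} (ζ : X → ℕ) (Λ : Set ℝ) : Set X := {x | ∃ l ∈ Λ, den l ∣ ζ x}

/-- An `[α,β]`-draft on an a-space `(X, ζ)`. -/
def IsDraft {X : Type*} [TopologicalSpace X] (ζ : X → ℕ) (α β : ℝ)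
    (D : Set ℝ) (down up : ℝ → Set X) : Prop :=
  D ⊆ Set.Icc α β ∧ α ∈ D ∧ β ∈ D ∧
  (∀ r ∈ D, IsClosed (down r)) ∧ (∀ r ∈ D, IsClosed (up r)) ∧
  up α = Set.univ ∧ down β = Set.univ ∧
  (∀ r ∈ D, down r ∪ up r = Set.univ) ∧
  (∀ r ∈ D, ∀ s ∈ D, r < s → down r ∩ up s = ∅) ∧
  (∀ r ∈ D, ∀ s ∈ D, r ≤ s → up r ∩ down s ⊆ AC ζ (Set.Icc r s))

/-- A realisation of an `[α,β]`-draft. -/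
def IsRealisation {X : Type*} (α β : ℝ) (D : Set ℝ) (down up : ℝ → Set X)
    (f : X → ℝ) : Prop :=
  (∀ x, f x ∈ Set.Icc α β) ∧
  ∀ r ∈ D, (∀ x ∈ down r, f x ∈ Set.Icc α r) ∧ (∀ x ∈ up r, f x ∈ Set.Icc r β)

/-- A draft on a dense subset `D` of `[α,β]` has a unique realisation,
given by `f x = inf {r ∈ D : x ∈ r◁} = sup {r ∈ D : x ∈ r▷}`; moreover, this realisation
is continuous and decreases denominators. -/
theorem draft_dense_has_unique_realisation
    {X : Type*} [TopologicalSpace X] (ζ : X → ℕ) (α β : ℝ) (hαβ : α ≤ β)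
    (D : Set ℝ) (down up : ℝ → Set X)
    (h : IsDraft ζ α β D down up)
    (hdense : Set.Icc α β ⊆ closure D) :
    (∀ x : X, sInf {r | r ∈ D ∧ x ∈ down r} = sSup {r | r ∈ D ∧ x ∈ up r}) ∧
    IsRealisation α β D down up (fun x => sInf {r | r ∈ D ∧ x ∈ down r}) ∧
    (∀ g : X → ℝ, IsRealisation α β D down up g →
      g = fun x => sInf {r | r ∈ D ∧ x ∈ down r}) ∧
    Continuous (fun x : X => sInf {r | r ∈ D ∧ x ∈ down r}) ∧
    ∀ x : X, den (sInf {r | r ∈ D ∧ x ∈ down r}) ∣ ζ x := by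
  obtain ⟨hD, hαD, hβD, hdc, huc, huα, hdβ, hcup, hdisj, hAC⟩ := h
  set A : X → Set ℝ := fun x => {r | r ∈ D ∧ x ∈ down r} with hA
  set B : X → Set ℝ := fun x => {r | r ∈ D ∧ x ∈ up r} with hB
  have hAne : ∀ x, (A x).Nonempty := fun x => ⟨β, hβD, by rw [hdβ]; trivial⟩
  have hBne : ∀ x, (B x).Nonempty := fun x => ⟨α, hαD, by rw [huα]; trivial⟩
  have hAbdd : ∀ x, BddBelow (A x) := fun x => ⟨α, fun r hr => (hD hr.1).1⟩
  have hBbdd : ∀ x, BddAbove (B x) := fun x => ⟨β, fun r hr => (hD hr.1).2⟩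
  have hmemup : ∀ x, ∀ r ∈ D, x ∉ down r → x ∈ up r := by
    intro x r hr hx
    have := hcup r hr
    have hx2 : x ∈ down r ∪ up r := by rw [this]; trivial
    exact hx2.resolve_left hx
  have hmemdown : ∀ x, ∀ r ∈ D, x ∉ up r → x ∈ down r := by
    intro x r hr hx
    have := hcup r hr
    have hx2 : x ∈ down r ∪ up r := by rw [this]; trivial
    exact hx2.resolve_right hx
  have hkey : ∀ x, ∀ r ∈ B x, ∀ s ∈ A x, r ≤ s := by
    intro x r hr s hs
    by_contra hlt
    push_neg at hlt
    have := hdisj s hs.1 r hr.1 hlt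
    have : x ∈ down s ∩ up r := ⟨hs.2, hr.2⟩
    rw [hdisj s hs.1 r hr.1 hlt] at this
    exact this
  have hfα : ∀ x, α ≤ sInf (A x) := fun x => le_csInf (hAne x) fun r hr => (hD hr.1).1
  have hfβ : ∀ x, sInf (A x) ≤ β := fun x => csInf_le (hAbdd x) ⟨hβD, by rw [hdβ]; trivial⟩
  have hgα : ∀ x, α ≤ sSup (B x) := fun x => le_csSup (hBbdd x) ⟨hαD, by rw [huα]; trivial⟩
  have hgβ : ∀ x, sSup (B x) ≤ β := fun x => csSup_le (hBne x) fun r hr => (hD hr.1).2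
  have hdense' : ∀ a b : ℝ, α ≤ a → b ≤ β → a < b → ∃ t, t ∈ D ∧ t ∈ Set.Ioo a b := by
    intro a b ha hb hab
    have hm : (a + b) / 2 ∈ Set.Icc α β := ⟨by linarith, by linarith⟩
    have hcl := hdense hm
    have := mem_closure_iff.mp hcl (Set.Ioo a b) isOpen_Ioo ⟨by linarith, by linarith⟩
    obtain ⟨t, ht1, ht2⟩ := this
    exact ⟨t, ht2, ht1⟩
  have heq : ∀ x, sInf (A x) = sSup (B x) := by
    intro x
    refine le_antisymm ?_ (csSup_le (hBne x) fun r hr => le_csInf (hAne x) fun s hs => hkey x r hr s hs)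
    by_contra h'
    push_neg at h'
    obtain ⟨t, htD, ht⟩ := hdense' _ _ (hgα x) (hfβ x) h'
    by_cases hx : x ∈ down t
    · have : sInf (A x) ≤ t := csInf_le (hAbdd x) ⟨htD, hx⟩
      linarith [ht.2]
    · have : t ≤ sSup (B x) := le_csSup (hBbdd x) ⟨htD, hmemup x t htD hx⟩
      linarith [ht.1]
  refine ⟨heq, ⟨fun x => ⟨hfα x, hfβ x⟩, fun r hr =>
    ⟨fun x hx => ⟨hfα x, csInf_le (hAbdd x) ⟨hr, hx⟩⟩,
     fun x hx => ⟨by show r ≤ sInf (A x); rw [heq x]; exact le_csSup (hBbdd x) ⟨hr, hx⟩, hfβ x⟩⟩⟩, ?_, ?_, ?_⟩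
  · -- uniqueness
    intro g hg
    funext x
    refine le_antisymm (le_csInf (hAne x) fun r hr => ((hg.2 r hr.1).1 x hr.2).2) ?_
    show sInf (A x) ≤ g x
    rw [heq x]
    exact csSup_le (hBne x) fun r hr => ((hg.2 r hr.1).2 x hr.2).1
  · -- continuity
    have hIio : ∀ c : ℝ, IsOpen {x : X | sInf (A x) < c} := by
      intro c
      by_cases hc : β < c
      · have : {x : X | sInf (A x) < c} = Set.univ :=
          Set.eq_univ_of_forall fun x => lt_of_le_of_lt (hfβ x) hc
        rw [this]; exact isOpen_univ
      · push_neg at hc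
        have hset : {x : X | sInf (A x) < c} = ⋃ s ∈ {s | s ∈ D ∧ s < c}, (up s)ᶜ := by
          ext x
          simp only [Set.mem_setOf_eq, Set.mem_iUnion, Set.mem_compl_iff, exists_prop]
          constructor
          · intro hx
            obtain ⟨r, hr, hrc⟩ := exists_lt_of_csInf_lt (hAne x) hx
            obtain ⟨s, hsD, hs⟩ := hdense' r c (hD hr.1).1 hc hrc
            refine ⟨s, ⟨hsD, hs.2⟩, fun hxs => ?_⟩
            have : x ∈ down r ∩ up s := ⟨hr.2, hxs⟩
            rw [hdisj r hr.1 s hsD hs.1] at this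
            exact this
          · rintro ⟨s, ⟨hsD, hsc⟩, hxs⟩
            exact lt_of_le_of_lt (csInf_le (hAbdd x) ⟨hsD, hmemdown x s hsD hxs⟩) hsc
        rw [hset]
        exact isOpen_biUnion fun s hs => (huc s hs.1).isOpen_compl
    have hIoi : ∀ c : ℝ, IsOpen {x : X | c < sInf (A x)} := by
      intro c
      by_cases hc : c < α
      · have : {x : X | c < sInf (A x)} = Set.univ :=
          Set.eq_univ_of_forall fun x => lt_of_lt_of_le hc (hfα x)
        rw [this]; exact isOpen_univ
      · push_neg at hc
        have hset : {x : X | c < sInf (A x)} = ⋃ s ∈ {s | s ∈ D ∧ c < s}, (down s)ᶜ := by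
          ext x
          simp only [Set.mem_setOf_eq, Set.mem_iUnion, Set.mem_compl_iff, exists_prop]
          constructor
          · intro hx
            rw [heq x] at hx
            obtain ⟨r, hr, hrc⟩ := exists_lt_of_lt_csSup (hBne x) hx
            obtain ⟨s, hsD, hs⟩ := hdense' c r hc (hD hr.1).2 hrc
            refine ⟨s, ⟨hsD, hs.1⟩, fun hxs => ?_⟩
            have : x ∈ down s ∩ up r := ⟨hxs, hr.2⟩
            rw [hdisj s hsD r hr.1 hs.2] at this
            exact this
          · rintro ⟨s, ⟨hsD, hsc⟩, hxs⟩
            have : s ≤ sSup (B x) := le_csSup (hBbdd x) ⟨hsD, hmemup x s hsD hxs⟩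
            rw [heq x]
            exact lt_of_lt_of_le hsc this
        rw [hset]
        exact isOpen_biUnion fun s hs => (hdc s hs.1).isOpen_compl
    rw [(inferInstance : OrderTopology ℝ).topology_eq_generate_intervals,
      continuous_generateFrom_iff]
    rintro s ⟨a, rfl | rfl⟩
    · exact hIoi a
    · exact hIio a
  · -- denominator
    intro x
    rcases Nat.eq_zero_or_pos (ζ x) with hz | hz
    · rw [hz]; exact dvd_zero _
    have hn : ζ x ≠ 0 := hz.ne'
    have hclosed := isClosed_den_dvd (n := ζ x) hn
    have : sInf (A x) ∈ {r : ℝ | den r ∣ ζ x} := by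
      rw [← hclosed.closure_eq]
      apply Metric.mem_closure_iff.mpr
      intro ε hε
      have h1 : sInf (A x) - ε < sSup (B x) := by rw [← heq x]; linarith
      obtain ⟨r, hrB, hr⟩ := exists_lt_of_lt_csSup (hBne x) h1
      have h2 : sInf (A x) < sInf (A x) + ε := by linarith
      obtain ⟨s, hsA, hs⟩ := exists_lt_of_csInf_lt (hAne x) h2
      have hrs : r ≤ s := hkey x r hrB s hsA
      have hx2 : x ∈ up r ∩ down s := ⟨hrB.2, hsA.2⟩
      have hmem := hAC r hrB.1 s hsA.1 hrs hx2
      obtain ⟨l, hl, hld⟩ := hmem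
      refine ⟨l, hld, ?_⟩
      rw [Real.dist_eq, abs_lt]
      constructor <;> linarith [hl.1, hl.2]
    exact this
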